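/- Let h(n) = (1/2)(1 + cos(πn/2^N)) for n = 0,...,2^N − 1, and consider the vector ψ = ∑_n h(n)|n⟩ ∈ (C^{2^{N_A}}) ⊗ (C^{2^{N_B}}) with the bipartition n = l + 2^{N_A} m. Then ψ has Schmidt rank at most 3 across any such bipartition. -/

import Mathlib

open Finset Matrix Real

lemma matrix_rank_add_le {m n : Type*} [Fintype m] [Fintype n]
    (A B : Matrix m n ℂ) : (A + B).rank ≤ A.rank + B.rank := by
  simp only [Matrix.rank, Matrix.mulVecLin_add]
  refine le_trans (Submodule.finrank_mono ?_)
    (Submodule.finrank_add_le_finrank_add_finrank _ _)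
  intro x hx
  obtain ⟨y, rfl⟩ := hx
  exact Submodule.mem_sup.2 ⟨A.mulVecLin y, ⟨y, rfl⟩, B.mulVecLin y, ⟨y, rfl⟩,
    by rw [Matrix.mulVecLin_add]; rfl⟩

lemma rank_vecMulVec_le {m n : Type*} [Fintype m] [Fintype n]
    (w : m → ℂ) (v : n → ℂ) : (Matrix.vecMulVec w v).rank ≤ 1 := by
  rw [Matrix.vecMulVec_eq Unit w v]
  refine le_trans (Matrix.rank_mul_le_right _ _) ?_
  simpa using Matrix.rank_le_card_height (Matrix.replicateRow Unit v)

/-- the vector with Hann-window coefficients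
`h n = (1/2) (1 + cos (π n / 2^N))`, `N = NA + NB`, viewed across the bipartition
`n = l + 2^NA * m`, has Schmidt rank (rank of its coefficient matrix) at most `3`. -/
theorem hann_window_schmidt_rank (NA NB : ℕ) :
    (Matrix.of fun (l : Fin (2 ^ NA)) (m : Fin (2 ^ NB)) =>
        ((((1 : ℝ) / 2) * (1 + Real.cos (Real.pi * ((l : ℕ) + 2 ^ NA * (m : ℕ))
          / 2 ^ (NA + NB))) : ℝ) : ℂ)).rank ≤ 3 := by
  set a : ℂ := (Real.pi / 2 ^ (NA + NB)) * Complex.I with ha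
  have key : (Matrix.of fun (l : Fin (2 ^ NA)) (m : Fin (2 ^ NB)) =>
        ((((1 : ℝ) / 2) * (1 + Real.cos (Real.pi * ((l : ℕ) + 2 ^ NA * (m : ℕ))
          / 2 ^ (NA + NB))) : ℝ) : ℂ))
      = Matrix.vecMulVec (fun _ : Fin (2 ^ NA) => ((1 : ℂ)/2)) (fun _ => 1)
        + Matrix.vecMulVec (fun l : Fin (2 ^ NA) => (1/4 : ℂ) * Complex.exp (a * l))
            (fun m : Fin (2 ^ NB) => Complex.exp (a * (2 ^ NA * m)))
        + Matrix.vecMulVec (fun l : Fin (2 ^ NA) => (1/4 : ℂ) * Complex.exp (-(a * l)))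
            (fun m : Fin (2 ^ NB) => Complex.exp (-(a * (2 ^ NA * m)))) := by
    ext l m
    have hx : a * l + a * (2 ^ NA * m)
        = ((Real.pi * ((l : ℕ) + 2 ^ NA * (m : ℕ)) / 2 ^ (NA + NB) : ℝ) : ℂ) * Complex.I := by
      push_cast [ha]
      ring
    set x : ℝ := Real.pi * ((l : ℕ) + 2 ^ NA * (m : ℕ)) / 2 ^ (NA + NB) with hxdef
    have hcos : Complex.cos (x : ℂ)
        = (Complex.exp (x * Complex.I) + Complex.exp (-(x * Complex.I))) / 2 := by
      rw [Complex.cos, neg_mul]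
    simp only [Matrix.of_apply, Matrix.add_apply, Matrix.vecMulVec_apply, mul_assoc]
    rw [← Complex.exp_add, ← Complex.exp_add, ← neg_add, hx, ← hxdef]
    push_cast
    rw [hcos]
    ring
  rw [key]
  calc ((_ + _) + _ : Matrix _ _ ℂ).rank
      ≤ (_ + _ : Matrix _ _ ℂ).rank + _ := matrix_rank_add_le _ _
    _ ≤ _ + _ + _ := add_le_add (matrix_rank_add_le _ _) le_rfl
    _ ≤ 1 + 1 + 1 := add_le_add (add_le_add (_root_.rank_vecMulVec_le _ _) (_root_.rank_vecMulVec_le _ _)) (_root_.rank_vecMulVec_le _ _)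
    _ = 3 := rfl
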